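/- Let L0 ∈ ℝ^{n×n} have rank r with reduced SVD L0 = UΣVᵀ (U, V ∈ ℝ^{n×r} with orthonormal columns) and let T = {UXᵀ + YVᵀ : X, Y ∈ ℝ^{n×r}}. Then for every H ∈ ℝ^{n×n} there exists W0 ∈ ℝ^{n×n} with P_T W0 = 0 and ‖W0‖ ≤ 1 such that ⟨W0, H⟩ = ‖P_{T^⊥} H‖_*, and consequently ‖L0 + H‖_* ≥ ‖L0‖_* + ⟨UVᵀ, H⟩ + ‖P_{T^⊥} H‖_*. -/

import Mathlib

/-
Put `Z = P_{T^⊥} H`, so that `Uᵀ Z = 0` and `Z V = 0`. The partial isometry `W` of the polar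
decomposition `Z = W |Z|` inherits these two identities, hence lies in `T^⊥`; it has `‖W‖ ≤ 1`
and `⟨W, H⟩ = ⟨W, Z⟩ = tr |Z| = ‖Z‖_*`. The partial isometries `U Vᵀ` and `W` have orthogonal
initial and final spaces, so `‖U Vᵀ + W‖ ≤ 1` as well, and the duality `⟨M, B⟩ ≤ ‖B‖_*` for
`‖M‖ ≤ 1` gives `‖L₀ + H‖_* ≥ ⟨U Vᵀ + W, L₀ + H⟩ = ‖L₀‖_* + ⟨U Vᵀ, H⟩ + ‖Z‖_*`, because
`⟨U Vᵀ, L₀⟩ = tr Σ = ‖L₀‖_*` and `⟨W, L₀⟩ = 0` (as `L₀ ∈ T`).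
-/

open scoped BigOperators Matrix

abbrev Mat (n : ℕ) := Matrix (Fin n) (Fin n) ℝ

/-- Trace (Frobenius) inner product `⟨X, Y⟩ = trace (Xᵀ Y)`. -/
def finner {n : ℕ} (X Y : Mat n) : ℝ := ∑ i, ∑ j, X i j * Y i j

/-- Frobenius norm. -/
noncomputable def fnorm {n : ℕ} (X : Mat n) : ℝ := Real.sqrt (finner X X)

/-- Entrywise ℓ¹ norm. -/
def l1Norm {n : ℕ} (X : Mat n) : ℝ := ∑ i, ∑ j, |X i j|

/-- Entrywise ℓ∞ norm. -/
noncomputable def linfNorm {n : ℕ} (X : Mat n) : ℝ := ⨆ p : Fin n × Fin n, |X p.1 p.2|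

/-- Spectral (ℓ² operator) norm. -/
noncomputable def specNorm {n : ℕ} (X : Mat n) : ℝ := ‖Matrix.toEuclideanCLM (𝕜 := ℝ) X‖

/-- Nuclear norm: the sum of the singular values, i.e. of the square roots of the
eigenvalues of `Xᵀ * X`. -/
noncomputable def nucNorm {n : ℕ} (X : Mat n) : ℝ :=
  ∑ i, Real.sqrt ((show (Xᵀ * X).IsHermitian by
    simpa [Matrix.conjTranspose_eq_transpose_of_trivial] using
      Matrix.isHermitian_conjTranspose_mul_self X).eigenvalues i)

/-- Operator norm of a linear map on matrix space, w.r.t. the Frobenius norm: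
`sup {‖A X‖_F : ‖X‖_F = 1}`. -/
noncomputable def opNorm {n : ℕ} (A : Mat n →ₗ[ℝ] Mat n) : ℝ :=
  sSup {c : ℝ | ∃ X : Mat n, fnorm X = 1 ∧ c = fnorm (A X)}

/-- `P` is the orthogonal projection onto the subspace `V` (w.r.t. the trace inner product). -/
def IsOrthProj {n : ℕ} (V : Submodule ℝ (Mat n)) (P : Mat n →ₗ[ℝ] Mat n) : Prop :=
  (∀ X, P X ∈ V) ∧ (∀ X ∈ V, P X = X) ∧ (∀ X, ∀ Y ∈ V, finner (X - P X) Y = 0)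

/-- Orthogonal complement of a subspace of matrix space w.r.t. the trace inner product. -/
def orthComp {n : ℕ} (V : Submodule ℝ (Mat n)) : Submodule ℝ (Mat n) where
  carrier := {X | ∀ Y ∈ V, finner X Y = 0}
  zero_mem' := by intro Y hY; simp [finner]
  add_mem' := by
    intro a b ha hb Y hY
    have h1 := ha Y hY
    have h2 := hb Y hY
    simp only [finner, Matrix.add_apply, add_mul, Finset.sum_add_distrib] at *
    rw [h1, h2]; ring
  smul_mem' := by
    intro c a ha Y hY
    have h1 := ha Y hY
    simp only [finner, Matrix.smul_apply, smul_eq_mul, mul_assoc, ← Finset.mul_sum] at *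
    rw [h1]; ring

/-- The tangent space `T = {U Xᵀ + Y Vᵀ}` associated with the reduced SVD `L₀ = U Σ Vᵀ`. -/
def tangentT {n r : ℕ} (U V : Matrix (Fin n) (Fin r) ℝ) : Submodule ℝ (Mat n) where
  carrier := {A | ∃ X Y : Matrix (Fin n) (Fin r) ℝ, A = U * Xᵀ + Y * Vᵀ}
  zero_mem' := ⟨0, 0, by simp⟩
  add_mem' := by
    rintro a b ⟨X1, Y1, rfl⟩ ⟨X2, Y2, rfl⟩
    exact ⟨X1 + X2, Y1 + Y2, by rw [Matrix.transpose_add, Matrix.mul_add, Matrix.add_mul]; abel⟩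
  smul_mem' := by
    rintro c a ⟨X1, Y1, rfl⟩
    exact ⟨c • X1, c • Y1,
      by rw [Matrix.transpose_smul, Matrix.mul_smul, Matrix.smul_mul, smul_add]⟩

/-- The support subspace `Ω` of `S₀`: matrices vanishing wherever `S₀` vanishes. -/
def suppSub {n : ℕ} (S0 : Mat n) : Submodule ℝ (Mat n) where
  carrier := {X | ∀ i j, S0 i j = 0 → X i j = 0}
  zero_mem' := by intro i j _; rfl
  add_mem' := by
    intro a b ha hb i j h
    simp [Matrix.add_apply, ha i j h, hb i j h]
  smul_mem' := by
    intro c a ha i j h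
    simp [Matrix.smul_apply, ha i j h]

/-- Entrywise sign matrix. -/
noncomputable def sgnMat {n : ℕ} (S : Mat n) : Mat n := Matrix.of fun i j => Real.sign (S i j)

open Matrix WithLp
open scoped RealInnerProductSpace Matrix.Norms.L2Operator

def IsPartialIsometry {R : Type*} [Mul R] [Star R] (a : R) : Prop :=
  IsStarProjection (star a * a)

lemma IsPartialIsometry.add {R : Type*} [NonUnitalRing R] [StarRing R] {a b : R}
    (ha : IsPartialIsometry a) (hb : IsPartialIsometry b)
    (hab : star a * b = 0) (hab' : a * star b = 0) : IsPartialIsometry (a + b) := by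
  have hba : star b * a = 0 := by simpa using congr(star $hab)
  have h : star (a + b) * (a + b) = star a * a + star b * b := by
    simp only [star_add, add_mul, mul_add, hab, hba, add_zero, zero_add]
  rw [IsPartialIsometry, h]
  exact IsStarProjection.add ha hb (by rw [mul_assoc, ← mul_assoc a, hab', zero_mul, mul_zero])

lemma isHermitian_transpose_mul_self {k m : Type*} [Fintype k] (X : Matrix k m ℝ) :
    (Xᵀ * X).IsHermitian := by
  simpa using Matrix.isHermitian_conjTranspose_mul_self X

section RealMatrix

variable {m : Type*} [Fintype m] [DecidableEq m]

lemma trace_eq_sum_inner {ι : Type*} [Fintype ι] (A : Matrix m m ℝ)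
    (b : OrthonormalBasis ι ℝ (EuclideanSpace ℝ m)) :
    A.trace = ∑ i, ⟪b i, toEuclideanLin A (b i)⟫ := by
  have := LinearMap.trace_eq_sum_inner (Matrix.toEuclideanLin A) b
  rwa [toEuclideanLin_eq_toLin_orthonormal, Matrix.trace_toLin_eq] at this

lemma continuousOn_spectrum (A : Matrix m m ℝ) (f : ℝ → ℝ) : ContinuousOn f (spectrum ℝ A) :=
  A.finite_real_spectrum.continuousOn f

lemma transpose_cfc (f : ℝ → ℝ) (A : Matrix m m ℝ) : (cfc f A)ᵀ = cfc f A := by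
  have := (cfc_predicate f A).star_eq
  rwa [star_eq_conjTranspose, conjTranspose_eq_transpose_of_trivial] at this

lemma cfc_mul_cfc (f g : ℝ → ℝ) (A : Matrix m m ℝ) :
    cfc f A * cfc g A = cfc (fun x => f x * g x) A :=
  (cfc_mul f g A (continuousOn_spectrum A f) (continuousOn_spectrum A g)).symm

lemma cfc_mul_self (f : ℝ → ℝ) {A : Matrix m m ℝ} (hA : A.IsHermitian) :
    cfc f A * A = cfc (fun x => f x * x) A := by
  calc cfc f A * A = cfc f A * cfc id A := by rw [cfc_id ℝ A hA.isSelfAdjoint]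
    _ = cfc (fun x => f x * x) A := cfc_mul_cfc f id A

lemma trace_cfc {A : Matrix m m ℝ} (hA : A.IsHermitian) (f : ℝ → ℝ) :
    (cfc f A).trace = ∑ i, f (hA.eigenvalues i) := by
  rw [hA.cfc_eq, Matrix.IsHermitian.cfc, Unitary.conjStarAlgAut_apply, Matrix.trace_mul_cycle,
    Unitary.coe_star_mul_self, Matrix.one_mul, Matrix.trace_diagonal]
  rfl

lemma norm_toEuclideanLin_eigenvectorBasis {k : Type*} [Fintype k] (B : Matrix k m ℝ)
    (hB : (Bᵀ * B).IsHermitian) (i : m) :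
    ‖toEuclideanLin B (hB.eigenvectorBasis i)‖ = √(hB.eigenvalues i) := by
  set e := hB.eigenvectorBasis i
  have hee : ofLp e ⬝ᵥ ofLp e = 1 := by
    have h : ⟪e, e⟫ = 1 := by
      rw [real_inner_self_eq_norm_sq, hB.eigenvectorBasis.orthonormal.1 i, one_pow]
    rwa [EuclideanSpace.inner_eq_star_dotProduct, star_trivial] at h
  have h : ofLp e ⬝ᵥ ((Bᵀ * B) *ᵥ ofLp e) = (B *ᵥ ofLp e) ⬝ᵥ (B *ᵥ ofLp e) := by
    rw [← mulVec_mulVec, dotProduct_mulVec (ofLp e) Bᵀ, vecMul_transpose]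
  rw [← Real.sqrt_sq (norm_nonneg _), ← real_inner_self_eq_norm_sq]
  simp only [EuclideanSpace.inner_eq_star_dotProduct, ofLp_toLpLin, toLin'_apply, star_trivial]
  rw [← h, hB.mulVec_eigenvectorBasis i, dotProduct_smul, hee, smul_eq_mul, mul_one]

end RealMatrix

variable {n : ℕ}

lemma finner_eq_trace (X Y : Mat n) : finner X Y = (Xᵀ * Y).trace := by
  simp only [finner, Matrix.trace, Matrix.diag, Matrix.mul_apply, Matrix.transpose_apply]
  rw [Finset.sum_comm]

lemma finner_comm (X Y : Mat n) : finner X Y = finner Y X := by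
  simp only [finner, mul_comm]

lemma finner_add_left (X Y Z : Mat n) : finner (X + Y) Z = finner X Z + finner Y Z := by
  simp [finner, add_mul, Finset.sum_add_distrib]

lemma finner_add_right (X Y Z : Mat n) : finner X (Y + Z) = finner X Y + finner X Z := by
  simp [finner, mul_add, Finset.sum_add_distrib]

lemma finner_sub_left (X Y Z : Mat n) : finner (X - Y) Z = finner X Z - finner Y Z := by
  simp [finner, sub_mul, Finset.sum_sub_distrib]

lemma eq_zero_of_finner_self_eq_zero {X : Mat n} (h : finner X X = 0) : X = 0 := by
  rwa [finner_eq_trace, ← conjTranspose_eq_transpose_of_trivial,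
    trace_conjTranspose_mul_self_eq_zero_iff] at h

lemma finner_eq_sum_inner {ι : Type*} [Fintype ι] (M B : Mat n)
    (b : OrthonormalBasis ι ℝ (EuclideanSpace ℝ (Fin n))) :
    finner M B = ∑ i, ⟪toEuclideanLin M (b i), toEuclideanLin B (b i)⟫ := by
  rw [finner_eq_trace, trace_eq_sum_inner _ b]
  refine Finset.sum_congr rfl fun i _ => ?_
  simp only [EuclideanSpace.inner_eq_star_dotProduct, ofLp_toLpLin, toLin'_apply, star_trivial,
    ← mulVec_mulVec, dotProduct_mulVec, mulVec_transpose]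

lemma IsOrthProj.finner_apply {S : Submodule ℝ (Mat n)} {P : Mat n →ₗ[ℝ] Mat n}
    (hP : IsOrthProj S P) {Y : Mat n} (hY : Y ∈ S) (X : Mat n) : finner Y (P X) = finner Y X := by
  have h := hP.2.2 X Y hY
  rw [finner_sub_left] at h
  rw [finner_comm, finner_comm Y]
  linarith

lemma IsOrthProj.apply_eq_zero_of_mem_orthComp {S : Submodule ℝ (Mat n)}
    {P : Mat n →ₗ[ℝ] Mat n} (hP : IsOrthProj S P) {W : Mat n} (hW : W ∈ orthComp S) :
    P W = 0 := by
  refine eq_zero_of_finner_self_eq_zero ?_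
  rw [hP.finner_apply (hP.1 W), finner_comm]
  exact hW _ (hP.1 W)

lemma nucNorm_eq_trace_cfc_sqrt (X : Mat n) : nucNorm X = (cfc Real.sqrt (Xᵀ * X)).trace := by
  rw [trace_cfc (isHermitian_transpose_mul_self X)]
  rfl

lemma IsPartialIsometry.specNorm_le_one {M : Mat n} (h : IsPartialIsometry M) :
    specNorm M ≤ 1 := by
  have hMM : ‖M‖ * ‖M‖ ≤ 1 := CStarRing.norm_star_mul_self (x := M) ▸ IsStarProjection.norm_le _ h
  show ‖M‖ ≤ 1
  nlinarith [norm_nonneg M]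

lemma finner_le_nucNorm {M : Mat n} (hM : specNorm M ≤ 1) (B : Mat n) :
    finner M B ≤ nucNorm B := by
  let hB := isHermitian_transpose_mul_self B
  let e := hB.eigenvectorBasis
  have hMe (i : Fin n) : ‖toEuclideanLin M (e i)‖ ≤ 1 := by
    have := (toEuclideanCLM (𝕜 := ℝ) M).le_of_opNorm_le hM (e i)
    rwa [e.orthonormal.1 i, mul_one] at this
  calc finner M B = ∑ i, ⟪toEuclideanLin M (e i), toEuclideanLin B (e i)⟫ :=
        finner_eq_sum_inner M B e
    _ ≤ ∑ i, ‖toEuclideanLin B (e i)‖ := Finset.sum_le_sum fun i _ =>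
        (real_inner_le_norm _ _).trans (mul_le_of_le_one_left (norm_nonneg _) (hMe i))
    _ = nucNorm B := by simp only [e, norm_toEuclideanLin_eigenvectorBasis]; rfl

/- The partial isometry `W` of the polar decomposition `Z = W |Z|`. Since `(√0)⁻¹ = 0` in Lean,
the right factor is the pseudo-inverse of `|Z| = √(Zᵀ Z)`. -/
noncomputable def polarFactor (Z : Mat n) : Mat n := Z * cfc (fun x => (√x)⁻¹) (Zᵀ * Z)

lemma cfc_inv_sqrt_mul_self {A : Mat n} (hA : A.IsHermitian) :
    cfc (fun x => (√x)⁻¹) A * A = cfc Real.sqrt A := by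
  rw [cfc_mul_self _ hA]
  simp only [inv_mul_eq_div, Real.div_sqrt]

lemma transpose_polarFactor_mul (Z Y : Mat n) :
    (polarFactor Z)ᵀ * Y = cfc (fun x => (√x)⁻¹) (Zᵀ * Z) * Zᵀ * Y := by
  rw [polarFactor, transpose_mul, transpose_cfc]

lemma isPartialIsometry_polarFactor (Z : Mat n) : IsPartialIsometry (polarFactor Z) := by
  have h : star (polarFactor Z) * polarFactor Z = cfc (fun x => √x * (√x)⁻¹) (Zᵀ * Z) := by
    rw [star_eq_conjTranspose, conjTranspose_eq_transpose_of_trivial, transpose_polarFactor_mul,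
      polarFactor, Matrix.mul_assoc, ← Matrix.mul_assoc Zᵀ, ← Matrix.mul_assoc,
      cfc_inv_sqrt_mul_self (isHermitian_transpose_mul_self Z), cfc_mul_cfc]
  rw [IsPartialIsometry, h]
  refine ⟨?_, cfc_predicate _ _⟩
  rw [IsIdempotentElem, cfc_mul_cfc]
  congr 1
  funext x
  rcases eq_or_ne (√x) 0 with hx | hx <;> simp [hx]

lemma finner_polarFactor_self (Z : Mat n) : finner (polarFactor Z) Z = nucNorm Z := by
  rw [finner_eq_trace, transpose_polarFactor_mul, Matrix.mul_assoc,
    cfc_inv_sqrt_mul_self (isHermitian_transpose_mul_self Z), nucNorm_eq_trace_cfc_sqrt]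

lemma polarFactor_mul_eq_zero {k : Type*} {Z : Mat n} {V : Matrix (Fin n) k ℝ}
    (h : Z * V = 0) : polarFactor Z * V = 0 := by
  have hG : cfc (fun x => (√x)⁻¹) (Zᵀ * Z) =
      cfc (fun x => x⁻¹ * (√x)⁻¹) (Zᵀ * Z) * (Zᵀ * Z) := by
    rw [cfc_mul_self _ (isHermitian_transpose_mul_self Z)]
    congr 1
    funext x
    rcases eq_or_ne x 0 with hx | hx
    · simp [hx]
    · rw [mul_comm, ← mul_assoc, mul_inv_cancel₀ hx, one_mul]
  rw [polarFactor, hG]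
  simp only [Matrix.mul_assoc, h, Matrix.mul_zero]

section ReducedSVD

variable {r : ℕ} {U V : Matrix (Fin n) (Fin r) ℝ}

open scoped MatrixOrder in
lemma nucNorm_mul_diagonal_mul_transpose (hU : Uᵀ * U = 1) (hV : Vᵀ * V = 1) {d : Fin r → ℝ}
    (hd : 0 ≤ d) : nucNorm (U * diagonal d * Vᵀ) = ∑ i, d i := by
  set S := V * diagonal d * Vᵀ
  have hS : 0 ≤ S := by
    simpa [conjTranspose_eq_transpose_of_trivial] using
      ((posSemidef_diagonal_iff.mpr hd).mul_mul_conjTranspose_same V).nonneg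
  have hL : (U * diagonal d * Vᵀ)ᵀ * (U * diagonal d * Vᵀ) = S * S := by
    simp only [S, transpose_mul, transpose_transpose, diagonal_transpose, Matrix.mul_assoc]
    rw [← Matrix.mul_assoc Uᵀ, hU, ← Matrix.mul_assoc Vᵀ, hV]
  have hSS : 0 ≤ S * S := hL ▸ star_mul_self_nonneg (U * diagonal d * Vᵀ)
  rw [nucNorm_eq_trace_cfc_sqrt, hL, ← cfcₙ_eq_cfc, ← CFC.sqrt_eq_real_sqrt _ hSS,
    CFC.sqrt_mul_self S hS, trace_mul_cycle, hV, Matrix.one_mul, trace_diagonal]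

lemma finner_mul_transpose_mul_diagonal_mul_transpose (hU : Uᵀ * U = 1) (hV : Vᵀ * V = 1)
    (d : Fin r → ℝ) : finner (U * Vᵀ) (U * diagonal d * Vᵀ) = ∑ i, d i := by
  rw [finner_eq_trace, transpose_mul, transpose_transpose, Matrix.mul_assoc,
    ← Matrix.mul_assoc Uᵀ, ← Matrix.mul_assoc Uᵀ, hU, Matrix.one_mul, trace_mul_comm,
    Matrix.mul_assoc, hV, Matrix.mul_one, trace_diagonal]

lemma isPartialIsometry_mul_transpose (hU : Uᵀ * U = 1) (hV : Vᵀ * V = 1) :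
    IsPartialIsometry (U * Vᵀ) := by
  have h : star (U * Vᵀ) * (U * Vᵀ) = V * Vᵀ := by
    rw [star_eq_conjTranspose, conjTranspose_eq_transpose_of_trivial, transpose_mul,
      transpose_transpose, Matrix.mul_assoc, ← Matrix.mul_assoc Uᵀ, hU, Matrix.one_mul]
  rw [IsPartialIsometry, h]
  refine ⟨?_, ?_⟩
  · rw [IsIdempotentElem, Matrix.mul_assoc, ← Matrix.mul_assoc Vᵀ, hV, Matrix.one_mul]
  · rw [IsSelfAdjoint, star_eq_conjTranspose, conjTranspose_eq_transpose_of_trivial,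
      transpose_mul, transpose_transpose]

lemma mem_orthComp_tangentT_iff {Z : Mat n} :
    Z ∈ orthComp (tangentT U V) ↔ Uᵀ * Z = 0 ∧ Z * V = 0 := by
  constructor
  · intro hZ
    have hU := hZ (U * (Uᵀ * Z)) ⟨Zᵀ * U, 0, by simp [transpose_mul]⟩
    have hV := hZ (Z * V * Vᵀ) ⟨0, Z * V, by simp⟩
    rw [finner_eq_trace] at hU hV
    simp only [← trace_conjTranspose_mul_self_eq_zero_iff, conjTranspose_eq_transpose_of_trivial]
    constructor
    · rw [← hU]
      simp only [transpose_mul, transpose_transpose, Matrix.mul_assoc]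
    · rw [← hV, transpose_mul, Matrix.mul_assoc, trace_mul_comm]
      simp only [Matrix.mul_assoc]
  · rintro ⟨hUZ, hZV⟩ _ ⟨X, Y, rfl⟩
    have hZU : Zᵀ * U = 0 := by simpa [transpose_mul] using congr($hUZᵀ)
    have hVZ : Vᵀ * Zᵀ = 0 := by simpa [transpose_mul] using congr($hZVᵀ)
    have hUX : Zᵀ * (U * Xᵀ) = 0 := by rw [← Matrix.mul_assoc, hZU, Matrix.zero_mul]
    have hYV : (Zᵀ * (Y * Vᵀ)).trace = 0 := by
      rw [← Matrix.mul_assoc, trace_mul_comm, ← Matrix.mul_assoc, hVZ, Matrix.zero_mul,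
        trace_zero]
    rw [finner_eq_trace, Matrix.mul_add, trace_add, hUX, hYV, trace_zero, add_zero]

lemma mul_diagonal_mul_transpose_mem_tangentT (d : Fin r → ℝ) :
    U * diagonal d * Vᵀ ∈ tangentT U V :=
  ⟨V * diagonal d, 0, by simp [transpose_mul, Matrix.mul_assoc]⟩

lemma polarFactor_mem_orthComp_tangentT {Z : Mat n} (hZ : Z ∈ orthComp (tangentT U V)) :
    polarFactor Z ∈ orthComp (tangentT U V) := by
  obtain ⟨hUZ, hZV⟩ := mem_orthComp_tangentT_iff.mp hZ
  refine mem_orthComp_tangentT_iff.mpr ⟨?_, polarFactor_mul_eq_zero hZV⟩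
  rw [polarFactor, ← Matrix.mul_assoc, hUZ, Matrix.zero_mul]

lemma IsPartialIsometry.mul_transpose_add (hU : Uᵀ * U = 1) (hV : Vᵀ * V = 1) {W : Mat n}
    (hW : IsPartialIsometry W) (hWT : W ∈ orthComp (tangentT U V)) :
    IsPartialIsometry (U * Vᵀ + W) := by
  obtain ⟨hUW, hWV⟩ := mem_orthComp_tangentT_iff.mp hWT
  refine (isPartialIsometry_mul_transpose hU hV).add hW ?_ ?_
  · simp [star_eq_conjTranspose, conjTranspose_eq_transpose_of_trivial, transpose_mul,
      Matrix.mul_assoc, hUW]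
  · simp [star_eq_conjTranspose, conjTranspose_eq_transpose_of_trivial, Matrix.mul_assoc,
      ← transpose_mul, hWV]

end ReducedSVD

/-- Subdifferential of the nuclear norm at `L₀ = U Σ Vᵀ`: for every `H`
there is `W₀` with `P_T W₀ = 0`, `‖W₀‖ ≤ 1`, `⟨W₀, H⟩ = ‖P_{T^⊥} H‖₊`, and consequently
`‖L₀ + H‖₊ ≥ ‖L₀‖₊ + ⟨U Vᵀ, H⟩ + ‖P_{T^⊥} H‖₊`. -/
theorem statement9 {n r : ℕ}
    (L0 : Mat n) (U V : Matrix (Fin n) (Fin r) ℝ) (d : Fin r → ℝ)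
    (hU : Uᵀ * U = 1) (hV : Vᵀ * V = 1) (hd : ∀ i, 0 < d i)
    (hL0 : L0 = U * Matrix.diagonal d * Vᵀ)
    (PT PTperp : Mat n →ₗ[ℝ] Mat n)
    (hPT : IsOrthProj (tangentT U V) PT)
    (hPTperp : IsOrthProj (orthComp (tangentT U V)) PTperp) :
    ∀ H : Mat n,
      (∃ W0 : Mat n, PT W0 = 0 ∧ specNorm W0 ≤ 1 ∧ finner W0 H = nucNorm (PTperp H)) ∧
      nucNorm (L0 + H) ≥ nucNorm L0 + finner (U * Vᵀ) H + nucNorm (PTperp H) := by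
  intro H
  set Z := PTperp H
  set W := polarFactor Z
  have hW : W ∈ orthComp (tangentT U V) := polarFactor_mem_orthComp_tangentT (hPTperp.1 H)
  have hWpi : IsPartialIsometry W := isPartialIsometry_polarFactor Z
  have hWH : finner W H = nucNorm Z := by
    rw [← hPTperp.finner_apply hW, finner_polarFactor_self]
  refine ⟨⟨W, hPT.apply_eq_zero_of_mem_orthComp hW, hWpi.specNorm_le_one, hWH⟩, ?_⟩
  have hWL0 : finner W L0 = 0 := hW L0 (hL0 ▸ mul_diagonal_mul_transpose_mem_tangentT d)
  have hnucL0 : nucNorm L0 = finner (U * Vᵀ) L0 := by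
    rw [hL0, nucNorm_mul_diagonal_mul_transpose hU hV fun i => (hd i).le,
      finner_mul_transpose_mul_diagonal_mul_transpose hU hV]
  calc nucNorm L0 + finner (U * Vᵀ) H + nucNorm Z = finner (U * Vᵀ + W) (L0 + H) := by
        rw [finner_add_left, finner_add_right, finner_add_right, hnucL0, hWL0, hWH]; ring
    _ ≤ nucNorm (L0 + H) := finner_le_nucNorm (hWpi.mul_transpose_add hU hV hW).specNorm_le_one _
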